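/- arXiv:2012.00574 — 7 statements merged into one kernel-verified Lean document; each statement's English description precedes it below -/
import Mathlib

section
/- Let V_1, ..., V_k (k ≥ 1) be vector spaces each of dimension 2 over an algebraically closed field of characteristic 0. Let a = a_1 ⊗ ... ⊗ a_k and b = b_1 ⊗ ... ⊗ b_k be simple tensors with a_i, b_i linearly independent in V_i for every i. Then the affine tangent spaces T_a and T_b to the Segre cone at a and b satisfy dim(T_a + T_b) = min(2(k+1), 2^k); in particular for k ≥ 3 they intersect trivially (T_a ∩ T_b = 0). -/
open scoped TensorProduct
open Module

/-- The affine tangent space to the Segre cone at the simple tensor `⨂ₜ i, v i`. -/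
noncomputable def segreTangent (K : Type*) [Field K] {ι : Type*} [DecidableEq ι]
    (V : ι → Type*) [∀ i, AddCommGroup (V i)] [∀ i, Module K (V i)] (v : ∀ i, V i) :
    Submodule K (⨂[K] i, V i) :=
  Submodule.span K
    {t | ∃ (i : ι) (w : V i), t = PiTensorProduct.tprod K (Function.update v i w)}

/-!
Take `(a i, b i)` as basis of `V i`. The product basis of `⨂ V i` is indexed by `Fin k → Fin 2`,
and `a`, `b` are its vectors at the indices `0` and `1`. The tangent space at a basis tensor with
index `p` is spanned by the basis tensors whose index lies at Hamming distance at most one from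
`p`, so everything reduces to counting the two Hamming balls of radius one around `0` and `1`.
Every index `g` satisfies `d(0, g) + d(g, 1) = k`: for `k ≤ 2` the balls cover all `2 ^ k`
indices, while for `k ≥ 3` the triangle inequality makes them disjoint, of `k + 1` elements each.
-/

open Function Finset Submodule

section Hamming

variable {ι : Type*} [Fintype ι] {β : ι → Type*} [∀ i, DecidableEq (β i)]

def hammingBall [DecidableEq ι] [∀ i, Fintype (β i)] (p : ∀ i, β i) (r : ℕ) :
    Finset (∀ i, β i) :=
  {g | hammingDist p g ≤ r}

@[simp]
theorem mem_hammingBall [DecidableEq ι] [∀ i, Fintype (β i)] {p g : ∀ i, β i} {r : ℕ} :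
    g ∈ hammingBall p r ↔ hammingDist p g ≤ r := by
  simp [hammingBall]

theorem hammingDist_update_le_one [DecidableEq ι] (p : ∀ i, β i) (i : ι) (x : β i) :
    hammingDist p (update p i x) ≤ 1 := by
  refine card_le_one.2 fun j hj l hl => ?_
  simp only [mem_filter, mem_univ, true_and] at hj hl
  by_contra hjl
  rcases eq_or_ne j i with rfl | hji
  · exact hl (update_of_ne (Ne.symm hjl) _ _).symm
  · exact hj (update_of_ne hji _ _).symm

theorem hammingDist_le_one_iff_exists_update [DecidableEq ι] [Nonempty ι] {p g : ∀ i, β i} :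
    hammingDist p g ≤ 1 ↔ ∃ i x, g = update p i x := by
  refine ⟨fun h => ?_, fun ⟨i, x, hg⟩ => hg ▸ hammingDist_update_le_one p i x⟩
  obtain h | h := Nat.le_one_iff_eq_zero_or_eq_one.1 h
  · obtain i := Classical.arbitrary ι
    exact ⟨i, p i, by rw [update_eq_self, hammingDist_eq_zero.1 h]⟩
  · obtain ⟨i, hi⟩ := card_eq_one.1 h
    refine ⟨i, g i, funext fun j => ?_⟩
    rcases eq_or_ne j i with rfl | hji
    · simp
    · have : j ∉ ({i} : Finset ι) := by simpa using hji
      rw [← hi] at this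
      simpa [hji, eq_comm] using this

theorem hammingDist_zero_add_hammingDist_one (g : ι → Fin 2) :
    hammingDist 0 g + hammingDist g 1 = Fintype.card ι := by
  have hsplit : ∀ i, g i ≠ 1 ↔ ¬ (0 ≠ g i) := fun i => by omega
  simp only [hammingDist, Pi.zero_apply, Pi.one_apply, hsplit]
  exact card_filter_add_card_filter_not _

theorem card_hammingBall_one [DecidableEq ι] [Nonempty ι] (p : ι → Fin 2) :
    #(hammingBall p 1) = Fintype.card ι + 1 := by
  set f : Option ι → ι → Fin 2 := fun o => o.elim p fun i => update p i (p i + 1)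
  have hf : Injective f := by
    rintro (_ | i) (_ | j) h <;> simp only [f, Option.elim] at h
    · rfl
    · simpa using congrFun h j
    · simpa using congrFun h i
    · by_contra hij
      have hij : i ≠ j := fun h => hij (congrArg some h)
      simpa [hij] using congrFun h i
  have hball : hammingBall p 1 = univ.image f := by
    ext g
    simp only [mem_hammingBall, mem_univ, true_and, mem_image,
      hammingDist_le_one_iff_exists_update]
    constructor
    · rintro ⟨i, x, rfl⟩
      rcases eq_or_ne x (p i) with rfl | hx
      · exact ⟨none, (update_eq_self i p).symm⟩
      · exact ⟨some i, by rw [show x = p i + 1 by omega]; rfl⟩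
    · rintro ⟨_ | i, rfl⟩
      · exact ⟨Classical.arbitrary ι, _, (update_eq_self _ p).symm⟩
      · exact ⟨i, _, rfl⟩
  rw [hball, card_image_of_injective _ hf, card_univ, Fintype.card_option]

theorem hammingBall_zero_union_hammingBall_one [DecidableEq ι] (h : Fintype.card ι ≤ 2) :
    hammingBall (0 : ι → Fin 2) 1 ∪ hammingBall 1 1 = univ := by
  refine eq_univ_of_forall fun g => ?_
  have := hammingDist_zero_add_hammingDist_one g
  simp only [mem_union, mem_hammingBall, hammingDist_comm 1]
  omega

theorem disjoint_hammingBall_zero_hammingBall_one [DecidableEq ι] (h : 3 ≤ Fintype.card ι) :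
    Disjoint (hammingBall (0 : ι → Fin 2) 1) (hammingBall 1 1) := by
  refine disjoint_left.2 fun g h0 h1 => ?_
  have := hammingDist_triangle (0 : ι → Fin 2) g 1
  have h01 : hammingDist (0 : ι → Fin 2) 1 = Fintype.card ι := by
    simpa using hammingDist_zero_add_hammingDist_one (1 : ι → Fin 2)
  simp only [mem_hammingBall, hammingDist_comm 1] at h0 h1
  omega

end Hamming

theorem Module.Basis.finrank_span_image_finset {K M ι : Type*} [DivisionRing K]
    [AddCommGroup M] [Module K M] (B : Basis ι K M) (s : Finset ι) :
    finrank K (span K (B '' s)) = #s := by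
  rw [Set.image_eq_range]
  exact (finrank_span_eq_card (b := fun x : s => B x)
    (B.linearIndependent.comp _ Subtype.val_injective)).trans (Fintype.card_coe s)

section Segre

variable {K : Type*} [Field K] {ι : Type*} [Finite ι] [DecidableEq ι] {V : ι → Type*}
  [∀ i, AddCommGroup (V i)] [∀ i, Module K (V i)] {κ : ι → Type*}

theorem segreTangent_basis_eq_span_update (c : ∀ i, Basis (κ i) K (V i)) (p : ∀ i, κ i) :
    segreTangent K V (fun i => c i (p i)) =
      span K (Basis.piTensorProduct c '' {g | ∃ i x, g = update p i x}) := by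
  have htprod : ∀ i x, PiTensorProduct.tprod K (update (fun i => c i (p i)) i (c i x)) =
      Basis.piTensorProduct c (update p i x) := fun i x => by
    rw [Basis.piTensorProduct_apply]
    congr 1
    funext j
    exact (apply_update (fun j => c j) p i x j).symm
  apply le_antisymm
  · rw [segreTangent, span_le]
    rintro _ ⟨i, w, rfl⟩
    have hspan : span K (Set.range (c i)) ≤ (span K (Basis.piTensorProduct c ''
        {g | ∃ i x, g = update p i x})).comap
        ((PiTensorProduct.tprod K).toLinearMap (fun i => c i (p i)) i) :=
      span_le.2 <| by
        rintro _ ⟨x, rfl⟩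
        exact subset_span ⟨update p i x, ⟨i, x, rfl⟩, (htprod i x).symm⟩
    exact hspan ((c i).span_eq ▸ mem_top)
  · rw [span_le]
    rintro _ ⟨g, ⟨i, x, rfl⟩, rfl⟩
    exact subset_span ⟨i, c i x, (htprod i x).symm⟩

theorem segreTangent_basis_eq_span_hammingBall [Fintype ι] [Nonempty ι] [∀ i, Fintype (κ i)]
    [∀ i, DecidableEq (κ i)] (c : ∀ i, Basis (κ i) K (V i)) (p : ∀ i, κ i) :
    segreTangent K V (fun i => c i (p i)) =
      span K (Basis.piTensorProduct c '' hammingBall p 1) := by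
  rw [segreTangent_basis_eq_span_update]
  congr 2
  ext g
  simp [hammingDist_le_one_iff_exists_update]

end Segre

theorem two_mul_succ_le_two_pow {k : ℕ} (hk : 3 ≤ k) : 2 * (k + 1) ≤ 2 ^ k := by
  induction k, hk using Nat.le_induction with
  | base => norm_num
  | succ k hk ih =>
    have h2 : 2 ≤ 2 ^ k := Nat.one_lt_two_pow_iff.2 (by omega)
    rw [pow_succ]
    omega

theorem stmt1_general {K : Type*} [Field K] {k : ℕ} (hk : 1 ≤ k)
    (V : Fin k → Type*) [∀ i, AddCommGroup (V i)] [∀ i, Module K (V i)]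
    (hdim : ∀ i, finrank K (V i) = 2)
    (a b : ∀ i, V i) (hab : ∀ i, LinearIndependent K ![a i, b i]) :
    finrank K ↥(segreTangent K V a ⊔ segreTangent K V b) = min (2 * (k + 1)) (2 ^ k)
      ∧ (3 ≤ k → segreTangent K V a ⊓ segreTangent K V b = ⊥) := by
  have : Nonempty (Fin k) := ⟨⟨0, hk⟩⟩
  let c : ∀ i, Basis (Fin 2) K (V i) := fun i =>
    basisOfLinearIndependentOfCardEqFinrank (hab i) (by simp [hdim i])
  let B := Basis.piTensorProduct c
  have ha : a = fun i => c i ((0 : Fin k → Fin 2) i) := by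
    funext i
    simp [c, coe_basisOfLinearIndependentOfCardEqFinrank]
  have hb : b = fun i => c i ((1 : Fin k → Fin 2) i) := by
    funext i
    simp [c, coe_basisOfLinearIndependentOfCardEqFinrank]
  rw [ha, hb, segreTangent_basis_eq_span_hammingBall, segreTangent_basis_eq_span_hammingBall,
    ← span_union, ← Set.image_union, ← coe_union, B.finrank_span_image_finset]
  rcases le_or_gt 3 k with hk3 | hk2
  · have hdisj := disjoint_hammingBall_zero_hammingBall_one (ι := Fin k) (by simpa using hk3)
    refine ⟨?_, fun _ => disjoint_iff.1 <|
      B.linearIndependent.disjoint_span_image (disjoint_coe.2 hdisj)⟩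
    rw [card_union_of_disjoint hdisj, card_hammingBall_one, card_hammingBall_one,
      Fintype.card_fin, min_eq_left (two_mul_succ_le_two_pow hk3)]
    ring
  · refine ⟨?_, by omega⟩
    rw [hammingBall_zero_union_hammingBall_one (by simp; omega), card_univ]
    interval_cases k <;> simp

/-- for `k ≥ 1` vector spaces of dimension `2` over an algebraically
closed field of characteristic `0`, and simple tensors `a = a₁⊗...⊗a_k`,
`b = b₁⊗...⊗b_k` with `a i, b i` linearly independent for every `i`, the affine
tangent spaces to the Segre cone at `a` and `b` satisfy
`dim (T_a + T_b) = min (2(k+1)) (2^k)`; in particular for `k ≥ 3` they intersect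
trivially. -/
theorem stmt1 {K : Type*} [Field K] [IsAlgClosed K] [CharZero K] {k : ℕ} (hk : 1 ≤ k)
    (V : Fin k → Type*) [∀ i, AddCommGroup (V i)] [∀ i, Module K (V i)]
    [∀ i, FiniteDimensional K (V i)] (hdim : ∀ i, finrank K (V i) = 2)
    (a b : ∀ i, V i) (hab : ∀ i, LinearIndependent K ![a i, b i]) :
    finrank K ↥(segreTangent K V a ⊔ segreTangent K V b) = min (2 * (k + 1)) (2 ^ k)
      ∧ (3 ≤ k → segreTangent K V a ⊓ segreTangent K V b = ⊥) :=
  stmt1_general hk V hdim a b hab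
end

section
/- Let V_1, ..., V_k be finite-dimensional vector spaces with dim V_i ≥ 2, and fix an index i. Suppose p_1, ..., p_r are nonzero simple tensors in V_1 ⊗ ... ⊗ V_k whose images under the projection forgetting the i-th factor (i.e., the simple tensors obtained by deleting the i-th tensor factor) are pairwise distinct simple tensors q_1, ..., q_r in the tensor product of the remaining spaces, and that the affine tangent spaces to the Segre cone of the remaining factors at q_1, ..., q_r are linearly independent (their sum is direct of dimension r(1 + Σ_{j≠i}(dim V_j − 1))). Then the affine tangent spaces to the Segre cone of V_1 ⊗ ... ⊗ V_k at p_1, ..., p_r are also linearly independent. -/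
/-!
The upper bound holds for any `r` simple tensors with nonzero factors: each affine tangent
space at `⨂ v j` has dimension at most `1 + ∑ j (dim V j - 1)`, as it is spanned by `⨂ v j`
and the images of the hyperplanes `ker f_j`, where `f_j (v j) = 1`.

For the lower bound, split off the `i`-th factor: `⨂ V ≅ W ⊗ V i` with `W = ⨂_{j ≠ i} V j`.
Write `q_m ∈ W` for the projections and `T_m ⊆ W` for their tangent spaces. The dimension
hypothesis forces every `T_m` to have dimension `s + 1`, `s = ∑_{j ≠ i} (dim V j - 1)`, and
the `T_m` to be independent, so `q_m` together with `s` further vectors `c_{m,t} ∈ T_m`, for all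
`m`, form a linearly independent family. The tangent space at `p_m` contains `q_m ⊗ V i` and
`T_m ⊗ v_{m,i}`, hence the sum of the tangent spaces contains the tensors `q_m ⊗ e_a`
(`e` a basis of `V i`) and `c_{m,t} ⊗ v_{m,i}`. These `r · dim V i + r · s` tensors are linearly
independent: in the coordinates `W ⊗ V i ≅ ⊕ V i` of a basis extending the `q_m, c_{m,t}`, they
are independent vectors lying in distinct summands. Finally `dim V i + s = 1 + ∑ j (dim V j - 1)`.
-/

open scoped TensorProduct
open Module

open Function Set Submodule PiTensorProduct

section LinearAlgebra

variable {K M : Type*} [Field K] [AddCommGroup M] [Module K M]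

theorem Submodule.finrank_iSup_le_sum [FiniteDimensional K M] {ι : Type*} [Fintype ι]
    (p : ι → Submodule K M) : finrank K ↥(⨆ i, p i) ≤ ∑ i, finrank K (p i) := by
  classical
  suffices ∀ s : Finset ι, finrank K ↥(s.sup p) ≤ ∑ i ∈ s, finrank K (p i) by
    rw [← Finset.sup_univ_eq_iSup]
    exact this Finset.univ
  intro s
  induction s using Finset.induction_on with
  | empty => simp
  | insert a s ha ih =>
    rw [Finset.sup_insert, Finset.sum_insert ha]
    exact (finrank_add_le_finrank_add_finrank _ _).trans (Nat.add_le_add_left ih _)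

theorem Submodule.finrank_eq_of_finrank_iSup_eq [FiniteDimensional K M] {ι : Type*} [Fintype ι]
    {p : ι → Submodule K M} {d : ℕ} (hle : ∀ i, finrank K (p i) ≤ d)
    (h : finrank K ↥(⨆ i, p i) = Fintype.card ι * d) (i : ι) : finrank K (p i) = d := by
  by_contra hne
  have hlt : ∑ j, finrank K (p j) < ∑ _j : ι, d :=
    Finset.sum_lt_sum (fun j _ => hle j) ⟨i, Finset.mem_univ i, (hle i).lt_of_ne hne⟩
  have := finrank_iSup_le_sum p
  simp only [Finset.sum_const, Finset.card_univ, smul_eq_mul] at hlt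
  omega

theorem Submodule.exists_fin_le_span_insert {T : Submodule K M} [FiniteDimensional K T] {s : ℕ}
    (hT : finrank K T = s + 1) {q : M} (hq : q ∈ T) (hq0 : q ≠ 0) :
    ∃ c : Fin s → T, T ≤ span K (insert q (range fun t => (c t : M))) := by
  set q' : T := ⟨q, hq⟩
  obtain ⟨C, hC⟩ := (K ∙ q').exists_isCompl
  have hCs : finrank K C = s := by
    have := finrank_add_eq_of_isCompl hC
    rw [finrank_span_singleton (by simpa [q'] using hq0), hT] at this
    omega
  let b := finBasisOfFinrankEq K C hCs
  refine ⟨fun t => C.subtype (b t), le_of_eq ?_⟩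
  have hspan : span K (insert q' (range (C.subtype ∘ b))) = ⊤ := by
    rw [span_insert, ← hC.sup_eq_top, range_comp, span_image, b.span_eq, map_subtype_top]
  calc T = map T.subtype ⊤ := (map_subtype_top T).symm
    _ = span K (insert q (range fun t => (C.subtype (b t) : M))) := by
      rw [← hspan, map_span, image_insert_eq, ← range_comp]
      rfl

theorem exists_linearIndependent_sum_elim [FiniteDimensional K M] {μ : Type*} [Fintype μ]
    {s : ℕ} {T : μ → Submodule K M} (hT : ∀ m, finrank K (T m) = s + 1)
    (hsum : finrank K ↥(⨆ m, T m) = Fintype.card μ * (s + 1))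
    {q : μ → M} (hq : ∀ m, q m ∈ T m) (hq0 : ∀ m, q m ≠ 0) :
    ∃ c : μ × Fin s → M, (∀ p, c p ∈ T p.1) ∧ LinearIndependent K (Sum.elim q c) := by
  choose c hc using fun m => exists_fin_le_span_insert (hT m) (hq m) (hq0 m)
  refine ⟨fun p => c p.1 p.2, fun p => (c p.1 p.2).2, ?_⟩
  have hspan : ⨆ m, T m ≤ span K (range (Sum.elim q fun p : μ × Fin s => (c p.1 p.2 : M))) := by
    refine iSup_le fun m => (hc m).trans (span_mono (insert_subset ⟨.inl m, rfl⟩ ?_))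
    rintro _ ⟨t, rfl⟩
    exact ⟨.inr (m, t), rfl⟩
  rw [linearIndependent_iff_card_le_finrank_span, Set.finrank]
  have hcard : Fintype.card (μ ⊕ μ × Fin s) = Fintype.card μ * (s + 1) := by
    simp [mul_add, add_comm]
  have := finrank_mono hspan
  omega

variable {U : Type*} [AddCommGroup U] [Module K U]

theorem LinearIndependent.sigma_tmul {ι : Type*} {κ : ι → Type*} {y : ι → M}
    (hy : LinearIndependent K y) {f : ∀ x, κ x → U} (hf : ∀ x, LinearIndependent K (f x)) :
    LinearIndependent K fun p : Σ x, κ x => y p.1 ⊗ₜ[K] f p.1 p.2 := by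
  classical
  let B := Basis.span hy
  let e := TensorProduct.equivFinsuppOfBasisLeft B (N := U)
  have he x u : e.symm (Finsupp.single x u) = B x ⊗ₜ[K] u := by
    rw [LinearEquiv.symm_apply_eq, TensorProduct.equivFinsuppOfBasisLeft_apply_tmul,
      B.repr_self, Finsupp.mapRange_single, one_smul]
  let J := (span K (range y)).subtype.rTensor U ∘ₗ e.symm.toLinearMap
  have hJ : Injective J :=
    (Module.Flat.rTensor_preserves_injective_linearMap _ Subtype.val_injective).comp
      e.symm.injective
  have hJy : (J ∘ fun p : Σ x, κ x => Finsupp.single p.1 (f p.1 p.2))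
      = fun p => y p.1 ⊗ₜ[K] f p.1 p.2 := by
    ext p
    simp [J, he, B, Basis.span_apply]
  exact hJy ▸ (Finsupp.linearIndependent_single f hf).map' J (LinearMap.ker_eq_bot.mpr hJ)

theorem card_mul_finrank_add_card_le_finrank [FiniteDimensional K M] [FiniteDimensional K U]
    {ι β : Type*} [Fintype ι] [Fintype β] {q : ι → M} {c : β → M}
    (hy : LinearIndependent K (Sum.elim q c)) {u : β → U} (hu : ∀ b, u b ≠ 0)
    {P : Submodule K (M ⊗[K] U)} (hq : ∀ x w, q x ⊗ₜ w ∈ P) (hc : ∀ b, c b ⊗ₜ u b ∈ P) :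
    Fintype.card ι * finrank K U + Fintype.card β ≤ finrank K P := by
  let d : ι ⊕ β → ℕ := Sum.elim (fun _ => finrank K U) (fun _ => 1)
  let f : ∀ x, Fin (d x) → U
    | .inl _ => finBasis K U
    | .inr b => fun _ => u b
  have hf : ∀ x, LinearIndependent K (f x)
    | .inl _ => (finBasis K U).linearIndependent
    | .inr b => show LinearIndependent K fun _ : Fin 1 => u b from
        linearIndependent_unique_iff.mpr (hu b)
  have hmem : ∀ p : Σ x, Fin (d x), Sum.elim q c p.1 ⊗ₜ[K] f p.1 p.2 ∈ P
    | ⟨.inl x, _⟩ => hq x _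
    | ⟨.inr b, _⟩ => hc b
  have hcard : Fintype.card (Σ x, Fin (d x)) = Fintype.card ι * finrank K U + Fintype.card β := by
    simp [d]
  have hspan := finrank_span_eq_card (hy.sigma_tmul hf)
  have hle := finrank_mono (span_le.mpr (range_subset_iff.mpr hmem))
  omega

end LinearAlgebra

section SegreTangent

variable {K : Type*} [Field K] {ι : Type*} {V : ι → Type*} [∀ i, AddCommGroup (V i)]
  [∀ i, Module K (V i)]

theorem PiTensorProduct.tprod_ne_zero [Fintype ι] {v : ∀ i, V i} (hv : ∀ i, v i ≠ 0) :
    tprod K v ≠ 0 := by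
  choose f hf using fun i => Module.Projective.exists_dual_eq_one K (hv i)
  intro h
  have := congr_arg (lift ((MultilinearMap.mkPiAlgebra K ι K).compLinearMap f)) h
  simp [hf] at this

variable [DecidableEq ι]

theorem segreTangent_eq_bot_of_isEmpty [IsEmpty ι] (v : ∀ i, V i) : segreTangent K V v = ⊥ := by
  simp [segreTangent]

theorem tprod_mem_segreTangent [Nonempty ι] (v : ∀ i, V i) : tprod K v ∈ segreTangent K V v :=
  subset_span ⟨Classical.arbitrary ι, v _, by rw [update_eq_self]⟩

theorem finrank_segreTangent_le [Fintype ι] [∀ i, FiniteDimensional K (V i)] {v : ∀ i, V i}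
    (hv : ∀ i, v i ≠ 0) : finrank K (segreTangent K V v) ≤ 1 + ∑ i, (finrank K (V i) - 1) := by
  choose f hf using fun i => Module.Projective.exists_dual_eq_one K (hv i)
  let L i : V i →ₗ[K] ⨂[K] j, V j := (PiTensorProduct.tprod K).toLinearMap v i
  let N := ⨆ i, (LinearMap.ker (f i)).map (L i)
  have hle : segreTangent K V v ≤ (K ∙ tprod K v) ⊔ N := by
    refine span_le.mpr ?_
    rintro _ ⟨i, w, rfl⟩
    have hker : w - f i w • v i ∈ LinearMap.ker (f i) := by simp [hf]
    have hsplit : tprod K (update v i w) = f i w • tprod K v + L i (w - f i w • v i) := by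
      simp [L, map_sub, map_smul]
    rw [SetLike.mem_coe, hsplit]
    exact add_mem (mem_sup_left (smul_mem _ _ (mem_span_singleton_self _)))
      (mem_sup_right (mem_iSup_of_mem i (mem_map_of_mem hker)))
  have hker i : finrank K (LinearMap.ker (f i)) = finrank K (V i) - 1 := by
    have := (f i).finrank_ker_add_one_of_ne_zero (fun h => by simpa [h] using hf i)
    omega
  have hsup := (finrank_mono hle).trans (finrank_add_le_finrank_add_finrank _ _)
  have hline : finrank K (K ∙ tprod K v) ≤ 1 := (finrank_span_le_card _).trans (by simp)
  have hN : finrank K N ≤ ∑ i, (finrank K (V i) - 1) :=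
    (finrank_iSup_le_sum _).trans
      (Finset.sum_le_sum fun i _ => (finrank_map_le _ _).trans (hker i).le)
  omega

theorem finrank_iSup_segreTangent_le [Fintype ι] [∀ i, FiniteDimensional K (V i)] {μ : Type*}
    [Fintype μ] {v : μ → ∀ i, V i} (hv : ∀ m i, v m i ≠ 0) :
    finrank K ↥(⨆ m, segreTangent K V (v m))
      ≤ Fintype.card μ * (1 + ∑ i, (finrank K (V i) - 1)) :=
  calc finrank K ↥(⨆ m, segreTangent K V (v m)) ≤ ∑ m, finrank K (segreTangent K V (v m)) :=
        finrank_iSup_le_sum _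
    _ ≤ ∑ _m : μ, (1 + ∑ i, (finrank K (V i) - 1)) :=
        Finset.sum_le_sum fun m _ => finrank_segreTangent_le (hv m)
    _ = Fintype.card μ * (1 + ∑ i, (finrank K (V i) - 1)) := by simp

/-- `equivPiTensorComplSingletonTensor` as a linear map, with the complement of `{i}` written as
the subtype `{j // j ≠ i}` that `segreTangent` is applied to. -/
noncomputable def PiTensorProduct.splitOff (i : ι) :
    (⨂[K] j, V j) →ₗ[K] (⨂[K] j : {j // j ≠ i}, V j) ⊗[K] V i :=
  (equivPiTensorComplSingletonTensor K V i).toLinearMap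

theorem PiTensorProduct.splitOff_tprod (i : ι) (v : ∀ j, V j) :
    splitOff i (tprod K v) = (tprod K fun j : {j // j ≠ i} => v j) ⊗ₜ v i :=
  equivPiTensorComplSingletonTensor_tprod K V i v

theorem tprod_tmul_mem_map_segreTangent (i : ι) (v : ∀ j, V j) (w : V i) :
    (tprod K fun j : {j // j ≠ i} => v j) ⊗ₜ w ∈ (segreTangent K V v).map (splitOff i) := by
  refine ⟨tprod K (update v i w), subset_span ⟨i, w, rfl⟩, ?_⟩
  rw [splitOff_tprod, update_self]
  congr 2
  ext j
  exact update_of_ne j.2 w v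

theorem tmul_mem_map_segreTangent_of_mem (i : ι) (v : ∀ j, V j)
    {x : ⨂[K] j : {j // j ≠ i}, V j}
    (hx : x ∈ segreTangent K (fun j : {j // j ≠ i} => V j) fun j => v j) :
    x ⊗ₜ v i ∈ (segreTangent K V v).map (splitOff i) := by
  suffices segreTangent K (fun j : {j // j ≠ i} => V j) (fun j => v j)
      ≤ ((segreTangent K V v).map (splitOff i)).comap ((TensorProduct.mk K _ _).flip (v i)) from
    this hx
  refine span_le.mpr ?_
  rintro _ ⟨j, w, rfl⟩
  refine ⟨tprod K (update v j.1 w), subset_span ⟨j.1, w, rfl⟩, ?_⟩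
  rw [splitOff_tprod, update_of_ne (Ne.symm j.2)]
  simp only [LinearMap.flip_apply, TensorProduct.mk_apply]
  congr 2
  exact update_comp_eq_of_injective' v Subtype.val_injective j w

theorem card_mul_le_finrank_iSup_segreTangent [Fintype ι] [∀ i, FiniteDimensional K (V i)]
    {μ : Type*} [Fintype μ] (i : ι) [Nonempty {j // j ≠ i}] {v : μ → ∀ j, V j}
    (hv : ∀ m j, v m j ≠ 0) {s : ℕ}
    (hT : ∀ m, finrank K (segreTangent K (fun j : {j // j ≠ i} => V j) fun j => v m j) = s + 1)
    (hsum : finrank K ↥(⨆ m, segreTangent K (fun j : {j // j ≠ i} => V j) fun j => v m j)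
      = Fintype.card μ * (s + 1)) :
    Fintype.card μ * (finrank K (V i) + s) ≤ finrank K ↥(⨆ m, segreTangent K V (v m)) := by
  obtain ⟨c, hcT, hy⟩ := exists_linearIndependent_sum_elim hT hsum
    (fun m => tprod_mem_segreTangent _) (fun m => tprod_ne_zero fun j => hv m j)
  have hmem m : (segreTangent K V (v m)).map (splitOff i)
      ≤ (⨆ m, segreTangent K V (v m)).map (splitOff i) :=
    map_mono (le_iSup (fun m => segreTangent K V (v m)) m)
  have hlow := card_mul_finrank_add_card_le_finrank hy (u := fun p => v p.1 i) (fun p => hv _ _)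
    (fun m w => hmem m (tprod_tmul_mem_map_segreTangent i (v m) w))
    (fun p => hmem p.1 (tmul_mem_map_segreTangent_of_mem i (v p.1) (hcT p)))
  have hmap := finrank_map_le (splitOff i) (⨆ m, segreTangent K V (v m))
  rw [Fintype.card_prod, Fintype.card_fin] at hlow
  rw [mul_add]
  omega

end SegreTangent

theorem stmt5_general {K : Type*} [Field K] {k r : ℕ}
    (V : Fin k → Type*) [∀ j, AddCommGroup (V j)] [∀ j, Module K (V j)]
    [∀ j, FiniteDimensional K (V j)]
    (i : Fin k) (v : Fin r → ∀ j, V j) (hv : ∀ m j, v m j ≠ 0)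
    (hindep : finrank K
        ↥(⨆ m, segreTangent K (fun j : {j : Fin k // j ≠ i} => V j.1)
            (fun j => v m j.1))
      = r * (1 + ∑ j : {j : Fin k // j ≠ i}, (finrank K (V j.1) - 1))) :
    finrank K ↥(⨆ m, segreTangent K V (v m))
      = r * (1 + ∑ j, (finrank K (V j) - 1)) := by
  obtain rfl | hr := r.eq_zero_or_pos
  · simp
  set s := ∑ j : {j : Fin k // j ≠ i}, (finrank K (V j.1) - 1)
  set T := fun m => segreTangent K (fun j : {j : Fin k // j ≠ i} => V j.1) fun j => v m j.1
  rw [add_comm 1 s] at hindep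
  have hT m : finrank K (T m) = s + 1 := by
    refine finrank_eq_of_finrank_iSup_eq (fun m => ?_) (by simpa using hindep) m
    simpa [add_comm] using
      finrank_segreTangent_le (K := K) (v := fun j : {j : Fin k // j ≠ i} => v m j.1)
        fun j => hv m j
  have : Nonempty {j : Fin k // j ≠ i} := by
    refine not_isEmpty_iff.mp fun _ => ?_
    have h0 := hT ⟨0, hr⟩
    rw [show T ⟨0, hr⟩ = ⊥ from segreTangent_eq_bot_of_isEmpty _, finrank_bot] at h0
    omega
  have hlow := card_mul_le_finrank_iSup_segreTangent i hv hT (by simpa using hindep)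
  have hn : 0 < finrank K (V i) := finrank_pos_iff_exists_ne_zero.mpr ⟨_, hv ⟨0, hr⟩ i⟩
  have hsplit : ∑ j, (finrank K (V j) - 1) = (finrank K (V i) - 1) + s :=
    Fintype.sum_eq_add_sum_subtype_ne _ i
  refine le_antisymm (by simpa using finrank_iSup_segreTangent_le hv) ?_
  rw [hsplit, show 1 + (finrank K (V i) - 1 + s) = finrank K (V i) + s by omega]
  simpa using hlow

/-- fix an index `i`.  If nonzero simple tensors `p₁, ..., p_r` in
`V₁ ⊗ ... ⊗ V_k` project (by deleting the `i`-th tensor factor) to pairwise distinct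
simple tensors `q₁, ..., q_r` whose affine tangent spaces to the Segre cone of the
remaining factors are linearly independent (the sum has the maximal dimension
`r(1 + ∑_{j≠i}(dim V_j − 1))`), then the affine tangent spaces to the Segre cone at
`p₁, ..., p_r` are also linearly independent. -/
theorem stmt5 {K : Type*} [Field K] {k r : ℕ}
    (V : Fin k → Type*) [∀ j, AddCommGroup (V j)] [∀ j, Module K (V j)]
    [∀ j, FiniteDimensional K (V j)] (hdim : ∀ j, 2 ≤ finrank K (V j))
    (i : Fin k) (v : Fin r → ∀ j, V j) (hv : ∀ m j, v m j ≠ 0)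
    (hdist : ∀ m m', m ≠ m' →
      PiTensorProduct.tprod K (fun j : {j : Fin k // j ≠ i} => v m j.1)
        ≠ PiTensorProduct.tprod K (fun j : {j : Fin k // j ≠ i} => v m' j.1))
    (hindep : finrank K
        ↥(⨆ m, segreTangent K (fun j : {j : Fin k // j ≠ i} => V j.1)
            (fun j => v m j.1))
      = r * (1 + ∑ j : {j : Fin k // j ≠ i}, (finrank K (V j.1) - 1))) :
    finrank K ↥(⨆ m, segreTangent K V (v m))
      = r * (1 + ∑ j, (finrank K (V j) - 1)) :=
  stmt5_general V i v hv hindep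
end

section
/- Let V_1, V_2, V_3 each be 2-dimensional vector spaces over an algebraically closed field of characteristic 0, and let a = a_1 ⊗ a_2 ⊗ a_3 and c = c_1 ⊗ c_2 ⊗ c_3 be simple tensors with {a_i, c_i} linearly independent in V_i for each i = 1, 2, 3. Then the sum of the affine tangent spaces to the Segre cone at a and at c equals the whole 8-dimensional space V_1 ⊗ V_2 ⊗ V_3. -/
/-!
The tensors `x₁ ⊗ x₂ ⊗ x₃` with `xᵢ ∈ {aᵢ, cᵢ}` span `V₁ ⊗ V₂ ⊗ V₃`. Each such triple has a
majority letter, so the tensor differs from `a` or from `c` in at most one factor and hence lies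
in the tangent space there.
-/

open scoped TensorProduct
open Module

/-- The affine tangent space to the Segre cone in `V₁ ⊗ V₂ ⊗ V₃` at the simple tensor
`a ⊗ b ⊗ c`, namely `V₁ ⊗ b ⊗ c + a ⊗ V₂ ⊗ c + a ⊗ b ⊗ V₃`. -/
noncomputable def segreTangent3 (K : Type*) [Field K] {V1 V2 V3 : Type*}
    [AddCommGroup V1] [Module K V1] [AddCommGroup V2] [Module K V2]
    [AddCommGroup V3] [Module K V3]
    (a : V1) (b : V2) (c : V3) : Submodule K (V1 ⊗[K] (V2 ⊗[K] V3)) :=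
  Submodule.span K {x | ∃ w : V1, x = w ⊗ₜ[K] (b ⊗ₜ[K] c)}
    ⊔ Submodule.span K {x | ∃ w : V2, x = a ⊗ₜ[K] (w ⊗ₜ[K] c)}
    ⊔ Submodule.span K {x | ∃ w : V3, x = a ⊗ₜ[K] (b ⊗ₜ[K] w)}

open Submodule TensorProduct

theorem TensorProduct.span_tmul_tmul_eq_top {R M N P : Type*} [CommSemiring R]
    [AddCommMonoid M] [Module R M] [AddCommMonoid N] [Module R N]
    [AddCommMonoid P] [Module R P] {s : Set M} {t : Set N} {u : Set P}
    (hs : span R s = ⊤) (ht : span R t = ⊤) (hu : span R u = ⊤) :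
    span R (Set.image2 (fun m np => m ⊗ₜ[R] np) s (Set.image2 (fun n p => n ⊗ₜ[R] p) t u))
      = ⊤ := by
  simp only [← mk_apply]
  rw [← map₂_span_span R, ← map₂_span_span R, hs, ht, hu, map₂_mk_top_top_eq_top,
    map₂_mk_top_top_eq_top]

theorem Submodule.span_pair_eq_top_of_linearIndependent {K V : Type*} [Field K]
    [AddCommGroup V] [Module K V] (h : finrank K V = 2) {x y : V}
    (hxy : LinearIndependent K ![x, y]) : span K {x, y} = ⊤ := by
  simpa [Matrix.range_cons, Set.pair_comm] using
    hxy.span_eq_top_of_card_eq_finrank (by rw [Fintype.card_fin, h])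

section SegreTangent

variable {K V1 V2 V3 : Type*} [Field K] [AddCommGroup V1] [Module K V1]
  [AddCommGroup V2] [Module K V2] [AddCommGroup V3] [Module K V3]

theorem tmul_tmul_mem_segreTangent3_left (a w : V1) (b : V2) (c : V3) :
    w ⊗ₜ[K] (b ⊗ₜ[K] c) ∈ segreTangent3 K a b c :=
  mem_sup_left (mem_sup_left (subset_span ⟨w, rfl⟩))

theorem tmul_tmul_mem_segreTangent3_middle (a : V1) (b w : V2) (c : V3) :
    a ⊗ₜ[K] (w ⊗ₜ[K] c) ∈ segreTangent3 K a b c :=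
  mem_sup_left (mem_sup_right (subset_span ⟨w, rfl⟩))

theorem tmul_tmul_mem_segreTangent3_right (a : V1) (b : V2) (c w : V3) :
    a ⊗ₜ[K] (b ⊗ₜ[K] w) ∈ segreTangent3 K a b c :=
  mem_sup_right (subset_span ⟨w, rfl⟩)

theorem segreTangent3_sup_segreTangent3_eq_top {a1 c1 : V1} {a2 c2 : V2} {a3 c3 : V3}
    (h1 : span K {a1, c1} = ⊤) (h2 : span K {a2, c2} = ⊤) (h3 : span K {a3, c3} = ⊤) :
    segreTangent3 K a1 a2 a3 ⊔ segreTangent3 K c1 c2 c3 = ⊤ := by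
  rw [eq_top_iff, ← span_tmul_tmul_eq_top h1 h2 h3, span_le]
  rintro _ ⟨x, hx, _, ⟨y, hy, z, hz, rfl⟩, rfl⟩
  rcases hx with rfl | rfl <;> rcases hy with rfl | rfl <;> rcases hz with rfl | rfl
  · exact mem_sup_left (tmul_tmul_mem_segreTangent3_left _ _ _ _)
  · exact mem_sup_left (tmul_tmul_mem_segreTangent3_right _ _ _ _)
  · exact mem_sup_left (tmul_tmul_mem_segreTangent3_middle _ _ _ _)
  · exact mem_sup_right (tmul_tmul_mem_segreTangent3_left _ _ _ _)
  · exact mem_sup_left (tmul_tmul_mem_segreTangent3_left _ _ _ _)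
  · exact mem_sup_right (tmul_tmul_mem_segreTangent3_middle _ _ _ _)
  · exact mem_sup_right (tmul_tmul_mem_segreTangent3_right _ _ _ _)
  · exact mem_sup_right (tmul_tmul_mem_segreTangent3_left _ _ _ _)

end SegreTangent

theorem stmt7_general {K V1 V2 V3 : Type*} [Field K]
    [AddCommGroup V1] [Module K V1]
    [AddCommGroup V2] [Module K V2]
    [AddCommGroup V3] [Module K V3]
    (h1 : finrank K V1 = 2) (h2 : finrank K V2 = 2) (h3 : finrank K V3 = 2)
    (a1 c1 : V1) (a2 c2 : V2) (a3 c3 : V3)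
    (hi1 : LinearIndependent K ![a1, c1]) (hi2 : LinearIndependent K ![a2, c2])
    (hi3 : LinearIndependent K ![a3, c3]) :
    segreTangent3 K a1 a2 a3 ⊔ segreTangent3 K c1 c2 c3 = ⊤ :=
  segreTangent3_sup_segreTangent3_eq_top (span_pair_eq_top_of_linearIndependent h1 hi1)
    (span_pair_eq_top_of_linearIndependent h2 hi2) (span_pair_eq_top_of_linearIndependent h3 hi3)

/-- for `V₁, V₂, V₃` each of dimension `2` over an algebraically closed
field of characteristic `0`, and simple tensors `a = a₁⊗a₂⊗a₃`, `c = c₁⊗c₂⊗c₃` with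
`{aᵢ, cᵢ}` linearly independent for each `i`, the sum of the affine tangent spaces to
the Segre cone at `a` and `c` is the whole 8-dimensional space `V₁ ⊗ V₂ ⊗ V₃`. -/
theorem stmt7 {K V1 V2 V3 : Type*} [Field K] [IsAlgClosed K] [CharZero K]
    [AddCommGroup V1] [Module K V1] [FiniteDimensional K V1]
    [AddCommGroup V2] [Module K V2] [FiniteDimensional K V2]
    [AddCommGroup V3] [Module K V3] [FiniteDimensional K V3]
    (h1 : finrank K V1 = 2) (h2 : finrank K V2 = 2) (h3 : finrank K V3 = 2)
    (a1 c1 : V1) (a2 c2 : V2) (a3 c3 : V3)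
    (hi1 : LinearIndependent K ![a1, c1]) (hi2 : LinearIndependent K ![a2, c2])
    (hi3 : LinearIndependent K ![a3, c3]) :
    segreTangent3 K a1 a2 a3 ⊔ segreTangent3 K c1 c2 c3 = ⊤ :=
  stmt7_general h1 h2 h3 a1 c1 a2 c2 a3 c3 hi1 hi2 hi3
end

section
/- Let Y be a multiprojective space of dimension n with at least two factors (so Y ≇ P^n), and let u, v be two distinct points of Y. Then h^1(I_{2{u,v}}(1,...,1)) ≤ n; equivalently, the affine tangent spaces to the cone over the Segre variety at u and v never coincide. -/
open scoped TensorProduct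
open Module

theorem Function.injective_option_elim_update {ι : Type*} [DecidableEq ι] {η : ι → Type*}
    (e : ∀ i, η i) :
    Injective (fun z : Option ((i : ι) × {x : η i // x ≠ e i}) =>
      z.elim e (fun y => update e y.1 y.2.1)) := by
  rintro (_ | ⟨i, x⟩) (_ | ⟨j, y⟩) h
  · rfl
  · exact absurd (by simpa using (congrFun h j).symm) y.2
  · exact absurd (by simpa using congrFun h i) x.2
  · rcases eq_or_ne i j with rfl | hij
    · simpa [Subtype.ext_iff] using congrFun h i
    · exact absurd (by simpa [hij] using congrFun h i) x.2

theorem exists_dual_apply_eq_zero_apply_ne_zero {K V : Type*} [Field K] [AddCommGroup V]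
    [Module K V] {x y : V} (h : LinearIndependent K ![x, y]) :
    ∃ φ : Dual K V, φ x = 0 ∧ φ y ≠ 0 := by
  have hy : y ∉ K ∙ x := fun hy => by
    obtain ⟨a, ha⟩ := Submodule.mem_span_singleton.1 hy
    exact (LinearIndependent.pair_iff' (h.ne_zero 0)).1 h a ha
  obtain ⟨φ, hφy, hφ⟩ := Submodule.exists_dual_map_eq_bot_of_notMem hy inferInstance
  refine ⟨φ, ?_, hφy⟩
  simpa [hφ] using Submodule.mem_map_of_mem (f := φ) (Submodule.mem_span_singleton_self x)

theorem Module.exists_basis_apply_eq {K V : Type*} [Field K] [AddCommGroup V] [Module K V]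
    {x : V} (hx : x ≠ 0) : ∃ (s : Set V) (B : Basis s K V) (e : s), B e = x :=
  ⟨_, Basis.extend (.singleton (v := id) hx),
    ⟨x, LinearIndepOn.subset_extend _ _ rfl⟩, Basis.extend_apply_self _ _⟩

namespace PiTensorProduct

variable {K ι : Type*} [Field K] [DecidableEq ι] {V : ι → Type*}
  [∀ i, AddCommGroup (V i)] [∀ i, Module K (V i)]

instance [Finite ι] [∀ i, FiniteDimensional K (V i)] : FiniteDimensional K (⨂[K] i, V i) :=
  .of_basis (Basis.piTensorProduct fun i => Module.finBasis K (V i))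

theorem tprod_mem_segreTangent [Nonempty ι] (u : ∀ i, V i) :
    tprod K u ∈ segreTangent K V u := by
  let i := Classical.arbitrary ι
  exact Submodule.subset_span ⟨i, u i, by rw [Function.update_eq_self]⟩

theorem add_one_sum_finrank_sub_one_le_finrank_segreTangent [Fintype ι] [Nonempty ι]
    [∀ i, FiniteDimensional K (V i)] {u : ∀ i, V i} (hu : ∀ i, u i ≠ 0) :
    ∑ i, (finrank K (V i) - 1) + 1 ≤ finrank K (segreTangent K V u) := by
  classical
  choose s B e hBe using fun i => exists_basis_apply_eq (K := K) (hu i)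
  have := fun i => @Fintype.ofFinite _ (Module.Finite.finite_basis (B i))
  let p (z : Option ((i : ι) × {x // x ≠ e i})) : ∀ i, s i :=
    z.elim e (fun y => Function.update e y.1 y.2.1)
  have hmem z : Basis.piTensorProduct B (p z) ∈ segreTangent K V u := by
    rcases z with _ | ⟨i, x⟩
    · simpa [p, hBe] using tprod_mem_segreTangent u
    · refine Submodule.subset_span ⟨i, B i x, ?_⟩
      simp only [p, Option.elim, Basis.piTensorProduct_apply]
      congr 1
      ext j
      rw [Function.apply_update (fun i => B i) e i x,
        show (fun k => B k (e k)) = u from funext hBe]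
  have hli : LinearIndependent K fun z => (⟨_, hmem z⟩ : segreTangent K V u) :=
    .of_comp (segreTangent K V u).subtype <| (Basis.piTensorProduct B).linearIndependent.comp p
      (Function.injective_option_elim_update e)
  refine le_of_eq_of_le ?_ hli.fintype_card_le_finrank
  simp only [Fintype.card_option, Fintype.card_sigma, Fintype.card_subtype_compl,
    Fintype.card_subtype_eq, finrank_eq_card_basis (B _)]

theorem segreTangent_le_ker_dualDistrib [Fintype ι] {u : ∀ i, V i} {f : ∀ i, Dual K (V i)}
    {i j : ι} (hij : i ≠ j) (hi : f i (u i) = 0) (hj : f j (u j) = 0) :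
    segreTangent K V u ≤ LinearMap.ker (dualDistrib (⨂ₜ[K] l, f l)) := by
  refine Submodule.span_le.2 ?_
  rintro _ ⟨l, x, rfl⟩
  rw [SetLike.mem_coe, LinearMap.mem_ker, dualDistrib_apply]
  rcases eq_or_ne l i with rfl | hli
  · exact Finset.prod_eq_zero (Finset.mem_univ j) (by rwa [Function.update_of_ne hij.symm])
  · exact Finset.prod_eq_zero (Finset.mem_univ i) (by rwa [Function.update_of_ne hli.symm])

theorem tprod_notMem_segreTangent [Fintype ι] {u w : ∀ i, V i} (hw : ∀ l, w l ≠ 0) {i j : ι}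
    (hij : i ≠ j) (hi : LinearIndependent K ![u i, w i]) (hj : LinearIndependent K ![u j, w j]) :
    tprod K w ∉ segreTangent K V u := by
  have hf l : ∃ φ : Dual K (V l), (l = i ∨ l = j → φ (u l) = 0) ∧ φ (w l) ≠ 0 := by
    by_cases hl : l = i ∨ l = j
    · obtain rfl | rfl := hl
      · exact (exists_dual_apply_eq_zero_apply_ne_zero hi).imp fun _ h => ⟨fun _ => h.1, h.2⟩
      · exact (exists_dual_apply_eq_zero_apply_ne_zero hj).imp fun _ h => ⟨fun _ => h.1, h.2⟩
    · obtain ⟨φ, hφ⟩ : ∃ φ : Dual K (V l), φ (w l) ≠ 0 := by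
        simpa using (Module.forall_dual_apply_eq_zero_iff K (w l)).not.2 (hw l)
      exact ⟨φ, fun h => absurd h hl, hφ⟩
  choose f hfu hfw using hf
  intro hmem
  have := segreTangent_le_ker_dualDistrib hij (hfu i (.inl rfl)) (hfu j (.inr rfl)) hmem
  rw [LinearMap.mem_ker, dualDistrib_apply] at this
  exact Finset.prod_ne_zero_iff.2 (fun l _ => hfw l) this

end PiTensorProduct

theorem stmt10_general {K : Type*} [Field K] {k : ℕ}
    (hk : 2 ≤ k)
    (V : Fin k → Type*) [∀ i, AddCommGroup (V i)] [∀ i, Module K (V i)]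
    [∀ i, FiniteDimensional K (V i)] (hdim : ∀ i, 2 ≤ finrank K (V i))
    (u v : ∀ i, V i) (hu : ∀ i, u i ≠ 0) (hv : ∀ i, v i ≠ 0)
    (hne : ∃ i, LinearIndependent K ![u i, v i]) :
    2 * ((∑ i, (finrank K (V i) - 1)) + 1)
        - finrank K ↥(segreTangent K V u ⊔ segreTangent K V v)
      ≤ ∑ i, (finrank K (V i) - 1)
      ∧ segreTangent K V u ≠ segreTangent K V v := by
  obtain ⟨i, hi⟩ := hne
  have : Nontrivial (Fin k) := Fin.nontrivial_iff_two_le.2 hk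
  obtain ⟨j, hji⟩ := exists_ne i
  obtain ⟨x, hx⟩ := exists_linearIndependent_pair_of_one_lt_finrank (hdim j) (hu j)
  set w := Function.update v j x
  have hwv : PiTensorProduct.tprod K w ∈ segreTangent K V v :=
    Submodule.subset_span ⟨j, x, rfl⟩
  have hwu : PiTensorProduct.tprod K w ∉ segreTangent K V u := by
    refine PiTensorProduct.tprod_notMem_segreTangent (fun l => ?_) hji.symm
      (by simpa [w, hji.symm] using hi) (by simpa [w] using hx)
    rcases eq_or_ne l j with rfl | hl
    · simpa [w] using hx.ne_zero 1
    · simpa [w, hl] using hv l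
  have hlt : segreTangent K V u < segreTangent K V u ⊔ segreTangent K V v :=
    lt_of_le_of_ne le_sup_left fun h => hwu (h ▸ Submodule.mem_sup_right hwv)
  have hsup := Submodule.finrank_lt_finrank_of_lt hlt
  have hTu := PiTensorProduct.add_one_sum_finrank_sub_one_le_finrank_segreTangent (K := K) hu
  exact ⟨by omega, fun h => hwu (h ▸ hwv)⟩

/-- let `Y` be a multiprojective space of dimension
`n = ∑ (dim V i − 1)` with at least two factors (so `Y ≇ P^n`), and `u ≠ v` two
distinct points of `Y` (nonzero simple tensors, non-proportional in some factor).
Then `h^1(I_{2{u,v}}(1,...,1)) = 2(n+1) − dim (T_u + T_v) ≤ n`; equivalently the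
affine tangent spaces to the cone over the Segre variety at `u` and `v` never
coincide. -/
theorem stmt10 {K : Type*} [Field K] [IsAlgClosed K] [CharZero K] {k : ℕ}
    (hk : 2 ≤ k)
    (V : Fin k → Type*) [∀ i, AddCommGroup (V i)] [∀ i, Module K (V i)]
    [∀ i, FiniteDimensional K (V i)] (hdim : ∀ i, 2 ≤ finrank K (V i))
    (u v : ∀ i, V i) (hu : ∀ i, u i ≠ 0) (hv : ∀ i, v i ≠ 0)
    (hne : ∃ i, LinearIndependent K ![u i, v i]) :
    2 * ((∑ i, (finrank K (V i) - 1)) + 1)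
        - finrank K ↥(segreTangent K V u ⊔ segreTangent K V v)
      ≤ ∑ i, (finrank K (V i) - 1)
      ∧ segreTangent K V u ≠ segreTangent K V v :=
  stmt10_general hk V hdim u v hu hv hne
end

section
/- Let V_1 be an (n+1)-dimensional vector space (n ≥ 2) and V_2 a 2-dimensional vector space. Fix a (μ+1)-dimensional subspace L ⊆ V_1 with 1 ≤ μ ≤ n−1, a nonzero o ∈ V_2, and r ≥ μ+1 pairwise non-proportional vectors u_1, ..., u_r spanning L. Let T be the sum of the affine tangent spaces to the Segre cone of V_1 ⊗ V_2 at the points u_i ⊗ o. Then T = V_1 ⊗ o + L ⊗ V_2 and dim T = (n+1) + (μ+1), so the Terracini defect is δ = r(n+2) − dim T = r(n+2) − (n + μ + 2) = (r−1)(n+2) − μ. -/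
open scoped TensorProduct
open Module

/-- The affine tangent space to the Segre cone in `V₁ ⊗ V₂` at the simple tensor
`a ⊗ b`, namely `V₁ ⊗ b + a ⊗ V₂`. -/
noncomputable def segreTangent2 (K : Type*) [Field K] {V1 V2 : Type*}
    [AddCommGroup V1] [Module K V1] [AddCommGroup V2] [Module K V2]
    (a : V1) (b : V2) : Submodule K (V1 ⊗[K] V2) :=
  Submodule.span K {x | ∃ w : V1, x = w ⊗ₜ[K] b}
    ⊔ Submodule.span K {x | ∃ w : V2, x = a ⊗ₜ[K] w}

/-- `V₁` of dimension `n+1` (`n ≥ 2`), `V₂` of dimension `2`; fix a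
`(μ+1)`-dimensional subspace `L ⊆ V₁` with `1 ≤ μ ≤ n−1`, a nonzero `o ∈ V₂`, and
`r ≥ μ+1` pairwise non-proportional vectors `u₁, ..., u_r` spanning `L`.  Then the
sum `T` of the affine tangent spaces to the Segre cone at the points `uᵢ ⊗ o` equals
`V₁ ⊗ o + L ⊗ V₂`, `dim T = (n+1) + (μ+1)`, and the Terracini defect is
`δ = r(n+2) − dim T = (r−1)(n+2) − μ`. -/
theorem stmt12 {K V1 V2 : Type*} [Field K]
    [AddCommGroup V1] [Module K V1] [FiniteDimensional K V1]
    [AddCommGroup V2] [Module K V2] [FiniteDimensional K V2]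
    {n μ r : ℕ} (hn : 2 ≤ n) (hμ1 : 1 ≤ μ) (hμ2 : μ ≤ n - 1) (hr : μ + 1 ≤ r)
    (h1 : finrank K V1 = n + 1) (h2 : finrank K V2 = 2)
    (L : Submodule K V1) (hL : finrank K ↥L = μ + 1)
    (o : V2) (ho : o ≠ 0)
    (u : Fin r → V1) (hu : ∀ i, u i ∈ L)
    (hspan : Submodule.span K (Set.range u) = L)
    (hpair : ∀ i j, i ≠ j → LinearIndependent K ![u i, u j]) :
    (⨆ i, segreTangent2 K (u i) o)
        = Submodule.span K {x | ∃ w : V1, x = w ⊗ₜ[K] o}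
          ⊔ Submodule.span K {x : V1 ⊗[K] V2 | ∃ l ∈ L, ∃ w : V2, x = l ⊗ₜ[K] w}
      ∧ finrank K ↥(⨆ i, segreTangent2 K (u i) o) = (n + 1) + (μ + 1)
      ∧ r * (n + 2) - finrank K ↥(⨆ i, segreTangent2 K (u i) o)
          = (r - 1) * (n + 2) - μ := by
  classical
  set A : Submodule K (V1 ⊗[K] V2) :=
    Submodule.span K {x | ∃ w : V1, x = w ⊗ₜ[K] o} with hAdef
  set B : Submodule K (V1 ⊗[K] V2) :=
    Submodule.span K {x : V1 ⊗[K] V2 | ∃ l ∈ L, ∃ w : V2, x = l ⊗ₜ[K] w} with hBdef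
  -- Step 1: find e completing o to a basis of V2
  have hso : finrank K ↥(Submodule.span K {o}) = 1 := finrank_span_singleton ho
  obtain ⟨e, he⟩ : ∃ e, e ∉ Submodule.span K {o} := by
    by_contra h
    push_neg at h
    have : Submodule.span K {o} = ⊤ := Submodule.eq_top_iff'.2 h
    rw [this, finrank_top, h2] at hso
    omega
  have li : LinearIndependent K ![o, e] := by
    rw [linearIndependent_fin2]
    simp only [Matrix.cons_val_one, Matrix.head_cons, Matrix.cons_val_zero]
    refine ⟨fun h => he (h ▸ Submodule.zero_mem _), fun a h => ?_⟩
    rcases eq_or_ne a 0 with rfl | ha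
    · simp at h; exact ho h.symm
    · refine he ?_
      rw [show e = a⁻¹ • o by rw [← h, smul_smul, inv_mul_cancel₀ ha, one_smul]]
      exact Submodule.smul_mem _ _ (Submodule.mem_span_singleton_self o)
  have hcard : Fintype.card (Fin 2) = finrank K V2 := by simp [h2]
  set b : Basis (Fin 2) K V2 := basisOfLinearIndependentOfCardEqFinrank li hcard with hbdef
  have hb : ⇑b = ![o, e] := coe_basisOfLinearIndependentOfCardEqFinrank li hcard
  have hb0 : b 0 = o := by rw [hb]; rfl
  have hb1 : b 1 = e := by rw [hb]; rfl
  -- dual functionals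
  set φ : V2 →ₗ[K] K := b.coord 1 with hφdef
  set ψ : V2 →ₗ[K] K := b.coord 0 with hψdef
  have hφo : φ o = 0 := by rw [hφdef, ← hb0, Basis.coord_apply, b.repr_self]; simp
  have hφe : φ e = 1 := by rw [hφdef, ← hb1, Basis.coord_apply, b.repr_self]; simp
  have hψo : ψ o = 1 := by rw [hψdef, ← hb0, Basis.coord_apply, b.repr_self]; simp
  -- every w : V2 is a combination of o and e
  have hspanV2 : ∀ w : V2, ∃ a c : K, a • o + c • e = w := by
    intro w
    have : w ∈ Submodule.span K {o, e} := by
      have := b.span_eq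
      have hr : Set.range b = {o, e} := by
        rw [hb]
        ext x
        simp [Matrix.range_cons, Matrix.range_empty]; tauto
      rw [hr] at this
      rw [this]; trivial
    exact Submodule.mem_span_pair.1 this
  -- projections
  set πe : V1 ⊗[K] V2 →ₗ[K] V1 :=
    (TensorProduct.rid K V1).toLinearMap.comp (LinearMap.lTensor V1 φ) with hπedef
  set πo : V1 ⊗[K] V2 →ₗ[K] V1 :=
    (TensorProduct.rid K V1).toLinearMap.comp (LinearMap.lTensor V1 ψ) with hπodef
  have hπe_t : ∀ (w : V1) (v : V2), πe (w ⊗ₜ[K] v) = φ v • w := by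
    intro w v; simp [hπedef, TensorProduct.smul_tmul']
  have hπo_t : ∀ (w : V1) (v : V2), πo (w ⊗ₜ[K] v) = ψ v • w := by
    intro w v; simp [hπodef, TensorProduct.smul_tmul']
  -- the maps f and g
  set f : V1 →ₗ[K] V1 ⊗[K] V2 := (TensorProduct.mk K V1 V2).flip o with hfdef
  set g : ↥L →ₗ[K] V1 ⊗[K] V2 :=
    ((TensorProduct.mk K V1 V2).flip e).comp L.subtype with hgdef
  have hf_apply : ∀ w : V1, f w = w ⊗ₜ[K] o := fun w => rfl
  have hg_apply : ∀ l : ↥L, g l = (l : V1) ⊗ₜ[K] e := fun l => rfl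
  set C : Submodule K (V1 ⊗[K] V2) := LinearMap.range g with hCdef
  have hA : A = LinearMap.range f := by
    apply le_antisymm
    · rw [hAdef, Submodule.span_le]
      rintro x ⟨w, rfl⟩
      exact ⟨w, rfl⟩
    · rintro x ⟨w, rfl⟩
      exact Submodule.subset_span ⟨w, rfl⟩
  -- injectivity of f and g
  have hf_inj : Function.Injective f := by
    intro x y hxy
    have := congrArg πo hxy
    simpa [hf_apply, hπo_t, hψo] using this
  have hg_inj : Function.Injective g := by
    intro x y hxy
    have := congrArg πe hxy
    simp only [hg_apply, hπe_t, hφe, one_smul] at this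
    exact Subtype.ext this
  have hdimA : finrank K ↥A = n + 1 := by
    rw [hA, LinearMap.finrank_range_of_inj hf_inj, h1]
  have hdimC : finrank K ↥C = μ + 1 := by
    rw [hCdef, LinearMap.finrank_range_of_inj hg_inj, hL]
  -- trivial intersection
  have hAC : A ⊓ C = ⊥ := by
    rw [Submodule.eq_bot_iff]
    rintro x ⟨hxA, hxC⟩
    rw [hA] at hxA
    obtain ⟨w, rfl⟩ := hxA
    obtain ⟨l, hl⟩ := hxC
    have h0 : (l : V1) = 0 := by
      have := congrArg πe hl
      simpa [hg_apply, hf_apply, hπe_t, hφe, hφo] using this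
    rw [← hl, hg_apply, h0, TensorProduct.zero_tmul]
  -- T = A ⊔ B
  have hT : (⨆ i, segreTangent2 K (u i) o) = A ⊔ B := by
    apply le_antisymm
    · apply iSup_le
      intro i
      apply sup_le
      · exact le_sup_of_le_left le_rfl
      · refine le_sup_of_le_right ?_
        rw [Submodule.span_le]
        rintro x ⟨w, rfl⟩
        exact Submodule.subset_span ⟨u i, hu i, w, rfl⟩
    · have hrpos : 0 < r := by omega
      apply sup_le
      · exact le_trans le_sup_left (le_iSup (fun i => segreTangent2 K (u i) o) ⟨0, hrpos⟩)
      · rw [hBdef, Submodule.span_le]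
        rintro x ⟨l, hl, w, rfl⟩
        rw [← hspan] at hl
        induction hl using Submodule.span_induction with
        | mem v hv =>
            obtain ⟨i, rfl⟩ := hv
            have : u i ⊗ₜ[K] w ∈ segreTangent2 K (u i) o :=
              le_sup_right (α := Submodule K (V1 ⊗[K] V2))
                (Submodule.subset_span ⟨w, rfl⟩)
            exact (le_iSup (fun i => segreTangent2 K (u i) o) i) this
        | zero => rw [TensorProduct.zero_tmul]; exact Submodule.zero_mem _
        | add a c _ _ ha hc =>
            rw [TensorProduct.add_tmul]; exact Submodule.add_mem _ ha hc
        | smul a v _ hv =>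
            rw [← TensorProduct.smul_tmul']; exact Submodule.smul_mem _ _ hv
  -- A ⊔ B = A ⊔ C
  have hBC : A ⊔ B = A ⊔ C := by
    apply le_antisymm
    · refine sup_le le_sup_left ?_
      rw [hBdef, Submodule.span_le]
      rintro x ⟨l, hl, w, rfl⟩
      obtain ⟨a, c, rfl⟩ := hspanV2 w
      rw [TensorProduct.tmul_add, TensorProduct.tmul_smul, TensorProduct.tmul_smul]
      refine Submodule.add_mem _ (Submodule.smul_mem _ _ ?_) (Submodule.smul_mem _ _ ?_)
      · exact le_sup_left (α := Submodule K (V1 ⊗[K] V2))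
          (Submodule.subset_span ⟨l, rfl⟩)
      · exact le_sup_right (α := Submodule K (V1 ⊗[K] V2)) ⟨⟨l, hl⟩, rfl⟩
    · refine sup_le le_sup_left ?_
      rintro x ⟨l, rfl⟩
      exact le_sup_right (α := Submodule K (V1 ⊗[K] V2))
        (Submodule.subset_span ⟨(l : V1), l.2, e, rfl⟩)
  have hdim : finrank K ↥(⨆ i, segreTangent2 K (u i) o) = (n + 1) + (μ + 1) := by
    rw [hT, hBC]
    have := Submodule.finrank_sup_add_finrank_inf_eq A C
    rw [hAC, hdimA, hdimC] at this
    simpa using this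
  refine ⟨hT.trans rfl, hdim, ?_⟩
  rw [hdim]
  obtain ⟨s, rfl⟩ : ∃ s, r = s + 1 := ⟨r - 1, by omega⟩
  have h3 : (s + 1) * (n + 2) = s * (n + 2) + (n + 2) := by ring
  have h4 : (s + 1) - 1 = s := by omega
  rw [h3, h4]
  have h5 : (n + 1) + (μ + 1) = (n + 2) + μ := by omega
  rw [h5]
  generalize s * (n + 2) = t
  omega
end

section
/- Let W = V_1' ⊗ ... ⊗ V_k' ⊆ V_1 ⊗ ... ⊗ V_k where V_i' ⊆ V_i are subspaces, and let p = v_1 ⊗ ... ⊗ v_k with v_i ∈ V_i' for all i. Then the affine tangent space to the Segre cone of W at p is the intersection of W with the affine tangent space to the Segre cone of V_1 ⊗ ... ⊗ V_k at p; equivalently, Σ_i v_1⊗...⊗V_i'⊗...⊗v_k = W ∩ (Σ_i v_1⊗...⊗V_i⊗...⊗v_k). -/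
open scoped TensorProduct
open Module

/-! A projection `π i` of `V i` onto `V' i` induces `⨂ π i`, which fixes `W = ⨂ V' i` pointwise
and, because it fixes every `v i`, maps the tangent space of the big Segre cone at `p` onto the
tangent space of the Segre cone of `W`. So an element of `W ∩ T_p` equals its own image, which
lies in the smaller tangent space. -/

theorem Submodule.exists_linearMap_retraction {K E : Type*} [Field K] [AddCommGroup E]
    [Module K E] (p : Submodule K E) : ∃ π : E →ₗ[K] E, (∀ x, π x ∈ p) ∧ ∀ x ∈ p, π x = x := by
  obtain ⟨g, hg⟩ := p.subtype.exists_leftInverse_of_injective p.ker_subtype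
  exact ⟨p.subtype ∘ₗ g, fun x => (g x).2,
    fun x hx => congrArg Subtype.val (LinearMap.congr_fun hg ⟨x, hx⟩)⟩

namespace PiTensorProduct

variable {K ι : Type*} [Field K]
  {V : ι → Type*} [∀ i, AddCommGroup (V i)] [∀ i, Module K (V i)]

variable (K) in
def tensorSubspace (V' : ∀ i, Submodule K (V i)) : Submodule K (⨂[K] i, V i) :=
  Submodule.span K {t | ∃ u : ∀ i, V i, (∀ i, u i ∈ V' i) ∧ t = tprod K u}

variable {V' : ∀ i, Submodule K (V i)}

theorem map_apply_eq_self_of_mem_tensorSubspace {π : ∀ i, V i →ₗ[K] V i}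
    (hπ : ∀ i, ∀ x ∈ V' i, π i x = x) {t : ⨂[K] i, V i} (ht : t ∈ tensorSubspace K V') :
    map π t = t := by
  suffices tensorSubspace K V' ≤ LinearMap.eqLocus (map π) LinearMap.id from this ht
  refine Submodule.span_le.2 ?_
  rintro _ ⟨u, hu, rfl⟩
  simp only [SetLike.mem_coe, LinearMap.mem_eqLocus, map_tprod, LinearMap.id_apply]
  exact congrArg (tprod K) (funext fun i => hπ i (u i) (hu i))

variable [DecidableEq ι]

variable (K) in
/-- The affine tangent space at `⨂ₜ i, v i` to the Segre cone of `tensorSubspace K V'`. -/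
def segreTangentIn (V' : ∀ i, Submodule K (V i)) (v : ∀ i, V i) : Submodule K (⨂[K] i, V i) :=
  Submodule.span K
    {t | ∃ (i : ι) (w : V i), w ∈ V' i ∧ t = tprod K (Function.update v i w)}

variable {v : ∀ i, V i}

theorem segreTangentIn_le_tensorSubspace (hv : ∀ i, v i ∈ V' i) :
    segreTangentIn K V' v ≤ tensorSubspace K V' := by
  refine Submodule.span_le.2 ?_
  rintro t ⟨i, w, hw, rfl⟩
  refine Submodule.subset_span ⟨Function.update v i w, fun j => ?_, rfl⟩
  rcases eq_or_ne j i with rfl | hji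
  · simpa using hw
  · simpa [Function.update_of_ne hji] using hv j

theorem segreTangentIn_le_segreTangent : segreTangentIn K V' v ≤ segreTangent K V v :=
  Submodule.span_mono fun _ ⟨i, w, _, ht⟩ => ⟨i, w, ht⟩

theorem map_tprod_update {π : ∀ i, V i →ₗ[K] V i} (hπv : ∀ i, π i (v i) = v i) (i : ι)
    (w : V i) : map π (tprod K (Function.update v i w)) = tprod K (Function.update v i (π i w)) := by
  rw [map_tprod]
  congr 1
  funext j
  rw [Function.apply_update (fun j => π j) v i w j]
  simp only [hπv]

theorem segreTangent_le_comap_map {π : ∀ i, V i →ₗ[K] V i} (hπV' : ∀ i x, π i x ∈ V' i)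
    (hπv : ∀ i, π i (v i) = v i) :
    segreTangent K V v ≤ (segreTangentIn K V' v).comap (map π) := by
  refine Submodule.span_le.2 ?_
  rintro _ ⟨i, w, rfl⟩
  rw [SetLike.mem_coe, Submodule.mem_comap, map_tprod_update hπv]
  exact Submodule.subset_span ⟨i, π i w, hπV' i w, rfl⟩

theorem segreTangentIn_eq_inf (hv : ∀ i, v i ∈ V' i) :
    segreTangentIn K V' v = tensorSubspace K V' ⊓ segreTangent K V v := by
  refine le_antisymm
    (le_inf (segreTangentIn_le_tensorSubspace hv) segreTangentIn_le_segreTangent) ?_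
  rintro t ⟨htW, htT⟩
  choose π hπV' hπ using fun i => (V' i).exists_linearMap_retraction
  have hπt : map π t ∈ segreTangentIn K V' v :=
    segreTangent_le_comap_map hπV' (fun i => hπ i (v i) (hv i)) htT
  rwa [map_apply_eq_self_of_mem_tensorSubspace hπ htW] at hπt

end PiTensorProduct

theorem stmt15_general {K : Type*} [Field K] {k : ℕ}
    (V : Fin k → Type*) [∀ i, AddCommGroup (V i)] [∀ i, Module K (V i)]
    (V' : ∀ i, Submodule K (V i))
    (v : ∀ i, V i) (hv : ∀ i, v i ∈ V' i) :
    Submodule.span K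
        {t | ∃ (i : Fin k) (w : V i), w ∈ V' i
          ∧ t = PiTensorProduct.tprod K (Function.update v i w)}
      = (Submodule.span K
          {t | ∃ u : ∀ i, V i, (∀ i, u i ∈ V' i)
            ∧ t = PiTensorProduct.tprod K u})
        ⊓ segreTangent K V v :=
  PiTensorProduct.segreTangentIn_eq_inf hv

/-- let `W = V₁' ⊗ ... ⊗ V_k' ⊆ V₁ ⊗ ... ⊗ V_k` (realized inside the
big tensor product as the span of the simple tensors with all entries in the
subspaces `V i' ⊆ V i`), and let `p = v₁ ⊗ ... ⊗ v_k` be a nonzero simple tensor with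
`v i ∈ V i'` for all `i`.  Then the affine tangent space to the Segre cone of `W` at
`p` (the span of the tensors obtained by replacing one factor `v i` by a vector of
`V i'`) equals `W ∩ T_p`, where `T_p` is the affine tangent space to the Segre cone
of `V₁ ⊗ ... ⊗ V_k` at `p`. -/
theorem stmt15 {K : Type*} [Field K] {k : ℕ}
    (V : Fin k → Type*) [∀ i, AddCommGroup (V i)] [∀ i, Module K (V i)]
    (V' : ∀ i, Submodule K (V i))
    (v : ∀ i, V i) (hv : ∀ i, v i ∈ V' i) (hv0 : ∀ i, v i ≠ 0) :
    Submodule.span K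
        {t | ∃ (i : Fin k) (w : V i), w ∈ V' i
          ∧ t = PiTensorProduct.tprod K (Function.update v i w)}
      = (Submodule.span K
          {t | ∃ u : ∀ i, V i, (∀ i, u i ∈ V' i)
            ∧ t = PiTensorProduct.tprod K u})
        ⊓ segreTangent K V v :=
  stmt15_general V V' v hv
end

section
/- Let V_1, V_2 be 2-dimensional and V_3 be 2-dimensional vector spaces over an algebraically closed field of characteristic 0 (so the Segre is P^1 × P^1 × P^1). Let u = u_1⊗u_2⊗u_3, v = v_1⊗v_2⊗v_3, o = o_1⊗o_2⊗o_3 be simple tensors with u_3 proportional to v_3, o_3 not proportional to u_3, u_1 proportional to o_1, v_2 proportional to o_2, and u_i not proportional to v_i for i = 1, 2. Then the sum of the three affine tangent spaces to the Segre cone at u, v, o has dimension exactly 7 (codimension 1 in the 8-dimensional space). -/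
/-!
Choose bases `(u₁, v₁)`, `(u₂, v₂)`, `(u₃, o₃)`. Scaling a factor of a simple tensor does
not change its tangent space, so `u`, `v`, `o` may be replaced by the basis tensors indexed by
`(0,0,0)`, `(1,1,0)`, `(0,1,1)`. The tangent space at the basis tensor indexed by `p` is spanned by
the basis tensors whose index lies on one of the three coordinate lines through `p`, so the sum of
the three tangent spaces is spanned by the basis tensors indexed by everything except `(1,0,1)`.
-/

open scoped TensorProduct
open Module

theorem Submodule.span_setOf_exists_eq_apply {K M N : Type*} [Field K] [AddCommGroup M]
    [Module K M] [AddCommGroup N] [Module K N] (f : M →ₗ[K] N) :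
    Submodule.span K {x | ∃ w, x = f w} = LinearMap.range f := by
  have : {x | ∃ w, x = f w} = (LinearMap.range f : Set N) := by ext; simp [eq_comm]
  rw [this, Submodule.span_eq]

theorem Module.Basis.range_eq_span_range_comp {K ι M N : Type*} [Field K] [AddCommGroup M]
    [Module K M] [AddCommGroup N] [Module K N] (b : Basis ι K M) (f : M →ₗ[K] N) :
    LinearMap.range f = Submodule.span K (Set.range (f ∘ b)) := by
  rw [LinearMap.range_eq_map, ← b.span_eq, Submodule.map_span, Set.range_comp]

theorem Module.Basis.finrank_span_image {K ι M : Type*} [Field K] [AddCommGroup M] [Module K M]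
    [DecidableEq M] (b : Basis ι K M) (s : Finset ι) :
    finrank K (Submodule.span K (b '' s)) = s.card := by
  have hs : LinearIndepOn K id (b '' s) := (b.linearIndependent.linearIndepOn _).id_image
  rw [← Finset.coe_image] at hs ⊢
  rw [finrank_span_finset_eq_card hs, Finset.card_image_of_injective _ b.injective]

section
variable {K V1 V2 V3 : Type*} [Field K] [AddCommGroup V1] [Module K V1] [AddCommGroup V2]
  [Module K V2] [AddCommGroup V3] [Module K V3]

theorem segreTangent3_eq_sup_range (a : V1) (b : V2) (c : V3) :
    segreTangent3 K a b c =
      LinearMap.range ((TensorProduct.mk K V1 (V2 ⊗[K] V3)).flip (b ⊗ₜ c)) ⊔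
      LinearMap.range (TensorProduct.mk K V1 _ a ∘ₗ (TensorProduct.mk K V2 V3).flip c) ⊔
      LinearMap.range (TensorProduct.mk K V1 _ a ∘ₗ TensorProduct.mk K V2 V3 b) := by
  simp only [← Submodule.span_setOf_exists_eq_apply]
  rfl

theorem segreTangent3_smul {a : V1} {b : V2} {c : V3} {r s t : K} (hr : r ≠ 0) (hs : s ≠ 0)
    (ht : t ≠ 0) : segreTangent3 K (r • a) (s • b) (t • c) = segreTangent3 K a b c := by
  simp only [segreTangent3_eq_sup_range, TensorProduct.smul_tmul_smul, map_smul,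
    LinearMap.smul_comp, LinearMap.comp_smul, LinearMap.range_smul _ _ hr, LinearMap.range_smul _ _ hs,
    LinearMap.range_smul _ _ ht, LinearMap.range_smul _ _ (mul_ne_zero hs ht)]

variable {ι1 ι2 ι3 : Type*} [Fintype ι1] [Fintype ι2] [Fintype ι3]
  [DecidableEq ι1] [DecidableEq ι2] [DecidableEq ι3]

def tangentIndices (p : ι1 × ι2 × ι3) : Finset (ι1 × ι2 × ι3) :=
  Finset.univ.image (fun i ↦ (i, p.2)) ∪ Finset.univ.image (fun j ↦ (p.1, j, p.2.2)) ∪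
    Finset.univ.image (fun k ↦ (p.1, p.2.1, k))

theorem segreTangent3_basis (b1 : Basis ι1 K V1) (b2 : Basis ι2 K V2) (b3 : Basis ι3 K V3)
    (p : ι1 × ι2 × ι3) :
    segreTangent3 K (b1 p.1) (b2 p.2.1) (b3 p.2.2) =
      Submodule.span K (b1.tensorProduct (b2.tensorProduct b3) '' tangentIndices p) := by
  simp only [segreTangent3_eq_sup_range, b1.range_eq_span_range_comp,
    b2.range_eq_span_range_comp, b3.range_eq_span_range_comp, ← Submodule.span_union,
    tangentIndices, Finset.coe_union, Finset.coe_image, Finset.coe_univ, Set.image_union,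
    Set.image_univ, ← Set.range_comp]
  simp only [Function.comp_def, Basis.tensorProduct_apply', LinearMap.comp_apply,
    TensorProduct.mk_apply, LinearMap.flip_apply]

end
theorem stmt17_general {K V1 V2 V3 : Type*} [Field K]
    [AddCommGroup V1] [Module K V1]
    [AddCommGroup V2] [Module K V2]
    [AddCommGroup V3] [Module K V3]
    (h1 : finrank K V1 = 2) (h2 : finrank K V2 = 2) (h3 : finrank K V3 = 2)
    (u1 v1 o1 : V1) (u2 v2 o2 : V2) (u3 v3 o3 : V3)
    (hv3 : v3 ≠ 0) (ho1 : o1 ≠ 0) (ho2 : o2 ≠ 0)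
    (h34 : ∃ c : K, v3 = c • u3)
    (hind3 : LinearIndependent K ![u3, o3])
    (h1prop : ∃ c : K, o1 = c • u1)
    (h2prop : ∃ c : K, o2 = c • v2)
    (hind1 : LinearIndependent K ![u1, v1])
    (hind2 : LinearIndependent K ![u2, v2]) :
    finrank K
        ↥(segreTangent3 K u1 u2 u3 ⊔ segreTangent3 K v1 v2 v3
            ⊔ segreTangent3 K o1 o2 o3) = 7 := by
  classical
  obtain ⟨c, rfl⟩ := h34
  obtain ⟨a, rfl⟩ := h1prop
  obtain ⟨b, rfl⟩ := h2prop
  let B1 := basisOfLinearIndependentOfCardEqFinrank hind1 (by simp [h1])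
  let B2 := basisOfLinearIndependentOfCardEqFinrank hind2 (by simp [h2])
  let B3 := basisOfLinearIndependentOfCardEqFinrank hind3 (by simp [h3])
  have hu : segreTangent3 K u1 u2 u3 = segreTangent3 K (B1 0) (B2 0) (B3 0) := by
    simp [B1, B2, B3]
  have hv : segreTangent3 K v1 v2 (c • u3) = segreTangent3 K (B1 1) (B2 1) (B3 0) := by
    simpa [B1, B2, B3] using segreTangent3_smul (a := v1) (b := v2) (c := u3)
      one_ne_zero one_ne_zero (left_ne_zero_of_smul hv3)
  have ho : segreTangent3 K (a • u1) (b • v2) o3 = segreTangent3 K (B1 0) (B2 1) (B3 1) := by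
    simpa [B1, B2, B3] using segreTangent3_smul (c := o3)
      (left_ne_zero_of_smul ho1) (left_ne_zero_of_smul ho2) one_ne_zero
  rw [hu, hv, ho, segreTangent3_basis B1 B2 B3 (0, 0, 0), segreTangent3_basis B1 B2 B3 (1, 1, 0),
    segreTangent3_basis B1 B2 B3 (0, 1, 1), ← Submodule.span_union, ← Submodule.span_union,
    ← Set.image_union, ← Set.image_union, ← Finset.coe_union, ← Finset.coe_union,
    Basis.finrank_span_image]
  decide

/-- `V₁, V₂, V₃` two-dimensional over an algebraically closed field of
characteristic `0` (the Segre of `P^1 × P^1 × P^1`); simple tensors `u = u₁⊗u₂⊗u₃`,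
`v = v₁⊗v₂⊗v₃`, `o = o₁⊗o₂⊗o₃` with `u₃ ∝ v₃`, `o₃ ∦ u₃`, `u₁ ∝ o₁`, `v₂ ∝ o₂`, and
`uᵢ ∦ vᵢ` for `i = 1, 2`.  Then the sum of the three affine tangent spaces to the
Segre cone at `u, v, o` has dimension exactly `7`. -/
theorem stmt17 {K V1 V2 V3 : Type*} [Field K] [IsAlgClosed K] [CharZero K]
    [AddCommGroup V1] [Module K V1] [FiniteDimensional K V1]
    [AddCommGroup V2] [Module K V2] [FiniteDimensional K V2]
    [AddCommGroup V3] [Module K V3] [FiniteDimensional K V3]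
    (h1 : finrank K V1 = 2) (h2 : finrank K V2 = 2) (h3 : finrank K V3 = 2)
    (u1 v1 o1 : V1) (u2 v2 o2 : V2) (u3 v3 o3 : V3)
    (hv3 : v3 ≠ 0) (ho1 : o1 ≠ 0) (ho2 : o2 ≠ 0)
    (h34 : ∃ c : K, v3 = c • u3)
    (hind3 : LinearIndependent K ![u3, o3])
    (h1prop : ∃ c : K, o1 = c • u1)
    (h2prop : ∃ c : K, o2 = c • v2)
    (hind1 : LinearIndependent K ![u1, v1])
    (hind2 : LinearIndependent K ![u2, v2]) :
    finrank K
        ↥(segreTangent3 K u1 u2 u3 ⊔ segreTangent3 K v1 v2 v3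
            ⊔ segreTangent3 K o1 o2 o3) = 7 :=
  stmt17_general h1 h2 h3 u1 v1 o1 u2 v2 o2 u3 v3 o3 hv3 ho1 ho2 h34 hind3 h1prop h2prop hind1 hind2
end
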